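/- arXiv:1902.05182 — 4 statements merged into one kernel-verified Lean document; each statement's English description precedes it below -/
import Mathlib

section
/- Let η > 0, let −π < q < p < 0, let (μ_j)_{j≥1} be a strictly increasing sequence of positive real numbers, and let (a_j)_{j≥1}, (b_j)_{j≥1} be sequences of real numbers. Let g_p, g_q : (0,η) → ℝ be measurable functions such that for every l ≥ 1 there exists a constant C_l > 0 with |g_p(r) − Σ_{j=1}^l a_j r^{μ_j}| ≤ C_l r^{μ_{l+1}} and |g_q(r) − Σ_{j=1}^l b_j r^{μ_j}| ≤ C_l r^{μ_{l+1}} for all 0 < r < η. Define J(τ) = −τ e^{−ip} ∫_0^η g_p(r) e^{rτ(sin p + i cos p)} dr + τ e^{−iq} ∫_0^η g_q(r) e^{rτ(sin q + i cos q)} dr. Then for every l ≥ 1, J(τ) = −i Σ_{j=1}^l e^{iπμ_j/2} Γ(1+μ_j) (a_j e^{ipμ_j} − b_j e^{iqμ_j}) τ^{−μ_j} + O(τ^{−μ_{l+1}}) as τ → ∞. -/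
/-!
Write `r τ (sin θ + i cos θ) = -τ ζ r` with `ζ = -(sin θ + i cos θ) = e^{-i(θ + π/2)}`, so that
`Re ζ = -sin θ > 0` on both edges. Subtracting the first `l` terms of the expansion of `g` leaves a
remainder bounded by `C r^{μ_{l+1}}`, whose transform is `O(τ^{-μ_{l+1}})` by comparison with a
real Gamma integral. Each monomial `r^{μ_j}` contributes its integral over `(0, ∞)`, which is
`Γ(μ_j + 1) (τ ζ)^{-(μ_j + 1)}`, minus an integral over `[η, ∞)` that decays exponentially in `τ`.
The complex Gamma integral `∫_0^∞ r^ν e^{-w r} dr = Γ(ν + 1) w^{-(ν + 1)}` for `Re w > 0` follows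
from the real case by the identity theorem, both sides being holomorphic in `w`.
-/

open MeasureTheory Filter Asymptotics Set Complex

lemma integrableOn_rpow_mul_exp_neg_mul {ν b : ℝ} (hν : -1 < ν) (hb : 0 < b) :
    IntegrableOn (fun r : ℝ => r ^ ν * Real.exp (-b * r)) (Ioi 0) := by
  simpa [Real.rpow_one] using integrableOn_rpow_mul_exp_neg_mul_rpow hν zero_lt_one hb

lemma norm_rpow_mul_cexp_neg_mul {r : ℝ} (hr : 0 ≤ r) (ν : ℝ) (w : ℂ) :
    ‖((r ^ ν : ℝ) : ℂ) * cexp (-(w * r))‖ = r ^ ν * Real.exp (-w.re * r) := by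
  rw [norm_mul, norm_real, Real.norm_of_nonneg (Real.rpow_nonneg hr ν), norm_exp]
  simp

lemma integrableOn_rpow_mul_cexp_neg_mul {ν : ℝ} (hν : -1 < ν) {w : ℂ} (hw : 0 < w.re) :
    IntegrableOn (fun r : ℝ => ((r ^ ν : ℝ) : ℂ) * cexp (-(w * r))) (Ioi 0) := by
  refine (integrableOn_rpow_mul_exp_neg_mul hν hw).mono' (by fun_prop) ?_
  filter_upwards [ae_restrict_mem measurableSet_Ioi] with r hr
  exact (norm_rpow_mul_cexp_neg_mul (le_of_lt hr) ν w).le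

lemma differentiableAt_integral_rpow_mul_cexp_neg_mul {ν : ℝ} (hν : -1 < ν) {w₀ : ℂ}
    (hw₀ : 0 < w₀.re) :
    DifferentiableAt ℂ (fun w : ℂ => ∫ r in Ioi 0, ((r ^ ν : ℝ) : ℂ) * cexp (-(w * r))) w₀ := by
  have hε : 0 < w₀.re / 2 := by linarith
  refine (hasDerivAt_integral_of_dominated_loc_of_deriv_le (μ := volume.restrict (Ioi 0))
    (F := fun w r => ((r ^ ν : ℝ) : ℂ) * cexp (-(w * r)))
    (F' := fun w r => -(((r ^ (ν + 1) : ℝ) : ℂ) * cexp (-(w * r))))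
    (bound := fun r => r ^ (ν + 1) * Real.exp (-(w₀.re / 2) * r))
    (Metric.ball_mem_nhds w₀ hε) (Eventually.of_forall fun w => by fun_prop)
    (integrableOn_rpow_mul_cexp_neg_mul hν hw₀) (by fun_prop) ?_
    (integrableOn_rpow_mul_exp_neg_mul (by linarith) hε) ?_).2.differentiableAt
  · filter_upwards [ae_restrict_mem measurableSet_Ioi] with r (hr : 0 < r) w hw
    have hre : w₀.re / 2 < w.re := by
      have := (abs_re_le_norm (w - w₀)).trans_lt (mem_ball_iff_norm.mp hw)
      rw [sub_re] at this
      linarith [abs_lt.mp this]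
    rw [norm_neg, norm_rpow_mul_cexp_neg_mul hr.le]
    gcongr
  · filter_upwards [ae_restrict_mem measurableSet_Ioi] with r (hr : 0 < r) w _
    refine ((((hasDerivAt_id w).mul_const (r : ℂ)).neg.cexp).const_mul
      ((r ^ ν : ℝ) : ℂ)).congr_deriv ?_
    rw [Real.rpow_add_one hr.ne', ofReal_mul]
    simp only [id, Pi.neg_apply]
    ring

lemma integral_rpow_mul_exp_neg_mul {ν b : ℝ} (hν : -1 < ν) (hb : 0 < b) :
    ∫ r in Ioi 0, r ^ ν * Real.exp (-b * r) = Real.Gamma (ν + 1) * b ^ (-(ν + 1)) := by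
  have h := Real.integral_rpow_mul_exp_neg_mul_Ioi (a := ν + 1) (by linarith) hb
  rw [add_sub_cancel_right, one_div, Real.inv_rpow hb.le, ← Real.rpow_neg hb.le] at h
  simpa [mul_comm] using h

lemma ofReal_mul_cpow {τ : ℝ} (hτ : 0 < τ) {ζ : ℂ} (hζ : ζ ≠ 0) (a : ℂ) :
    ((τ : ℂ) * ζ) ^ a = (τ : ℂ) ^ a * ζ ^ a := by
  rw [cpow_def_of_ne_zero (mul_ne_zero (ofReal_ne_zero.2 hτ.ne') hζ),
    cpow_def_of_ne_zero (ofReal_ne_zero.2 hτ.ne'), cpow_def_of_ne_zero hζ,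
    log_ofReal_mul hτ hζ, ofReal_log hτ.le, add_mul, exp_add]

lemma integral_rpow_mul_cexp_neg_mul_ofReal {ν x : ℝ} (hν : -1 < ν) (hx : 0 < x) :
    ∫ r in Ioi 0, ((r ^ ν : ℝ) : ℂ) * cexp (-((x : ℂ) * r))
      = Real.Gamma (ν + 1) * (x : ℂ) ^ (-((ν : ℂ) + 1)) := by
  have hcast : (x : ℂ) ^ (-((ν : ℂ) + 1)) = ((x ^ (-(ν + 1)) : ℝ) : ℂ) := by
    rw [ofReal_cpow hx.le]
    push_cast
    rfl
  rw [hcast, ← ofReal_mul, ← integral_rpow_mul_exp_neg_mul hν hx, ← integral_complex_ofReal]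
  push_cast
  simp only [neg_mul]
theorem integral_rpow_mul_cexp_neg_mul {ν : ℝ} (hν : -1 < ν) {w : ℂ} (hw : 0 < w.re) :
    ∫ r in Ioi 0, ((r ^ ν : ℝ) : ℂ) * cexp (-(w * r))
      = Real.Gamma (ν + 1) * w ^ (-((ν : ℂ) + 1)) := by
  let U : Set ℂ := {w | 0 < w.re}
  have hU : IsOpen U := isOpen_lt continuous_const continuous_re
  have hlhs : AnalyticOnNhd ℂ
      (fun w : ℂ => ∫ r in Ioi 0, ((r ^ ν : ℝ) : ℂ) * cexp (-(w * r))) U :=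
    (analyticOnNhd_iff_differentiableOn hU).2 fun w hw =>
      (differentiableAt_integral_rpow_mul_cexp_neg_mul hν hw).differentiableWithinAt
  have hrhs : AnalyticOnNhd ℂ (fun w : ℂ => Real.Gamma (ν + 1) * w ^ (-((ν : ℂ) + 1))) U :=
    (analyticOnNhd_iff_differentiableOn hU).2 fun w hw =>
      ((differentiableAt_id.cpow_const (Or.inl hw)).const_mul _).differentiableWithinAt
  have hreal : (1 : ℂ) ∈ closure
      ({w | ∫ r in Ioi 0, ((r ^ ν : ℝ) : ℂ) * cexp (-(w * r))
        = Real.Gamma (ν + 1) * w ^ (-((ν : ℂ) + 1))} \ {1}) := by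
    refine Metric.mem_closure_iff.2 fun ε hε => ⟨((1 + ε / 2 : ℝ) : ℂ), ⟨?_, ?_⟩, ?_⟩
    · exact integral_rpow_mul_cexp_neg_mul_ofReal hν (by positivity)
    · simp [hε.ne']
    · rw [dist_eq, ← ofReal_one, ← ofReal_sub, norm_real, Real.norm_eq_abs]
      rw [abs_of_neg (by linarith)]
      linarith
  exact hlhs.eqOn_of_preconnected_of_mem_closure hrhs (convex_halfSpace_re_gt 0).isPreconnected
    (by simp [U]) hreal hw

lemma mul_integral_rpow_mul_cexp_neg_mul {ν τ : ℝ} (hν : -1 < ν) (hτ : 0 < τ) {ζ : ℂ}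
    (hζ : 0 < ζ.re) :
    (τ : ℂ) * ∫ r in Ioi 0, ((r ^ ν : ℝ) : ℂ) * cexp (-(τ * ζ * r))
      = Real.Gamma (ν + 1) * ζ ^ (-((ν : ℂ) + 1)) * ((τ ^ (-ν) : ℝ) : ℂ) := by
  have hζ0 : ζ ≠ 0 := fun h => by simp [h] at hζ
  rw [integral_rpow_mul_cexp_neg_mul hν (by rw [re_ofReal_mul]; positivity),
    ofReal_mul_cpow hτ hζ0]
  have hpow : (τ : ℂ) * (τ : ℂ) ^ (-((ν : ℂ) + 1)) = ((τ ^ (-ν) : ℝ) : ℂ) := by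
    rw [show -ν = 1 + -(ν + 1) by ring, Real.rpow_add hτ, Real.rpow_one, ofReal_mul,
      ofReal_cpow hτ.le]
    push_cast
    rfl
  linear_combination (Real.Gamma (ν + 1) * ζ ^ (-((ν : ℂ) + 1))) * hpow

lemma integral_Ioo_eq_integral_Ioi_sub_integral_Ici {E : Type*} [NormedAddCommGroup E]
    [NormedSpace ℝ E] {f : ℝ → E} {a b : ℝ} (hab : a < b) (hf : IntegrableOn f (Ioi a)) :
    ∫ r in Ioo a b, f r = (∫ r in Ioi a, f r) - ∫ r in Ici b, f r := by
  rw [← Ioo_union_Ici_eq_Ioi hab,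
    setIntegral_union ((Iio_disjoint_Ici le_rfl).mono_left Ioo_subset_Iio_self) measurableSet_Ici
      (hf.mono_set Ioo_subset_Ioi_self) (hf.mono_set (Ici_subset_Ioi.2 hab)),
    add_sub_cancel_right]

lemma norm_ofReal_mul_cexp_neg_mul_le {x C M r : ℝ} (hx : |x| ≤ C * r ^ M) (w : ℂ) :
    ‖(x : ℂ) * cexp (-(w * r))‖ ≤ C * (r ^ M * Real.exp (-w.re * r)) := by
  rw [norm_mul, norm_real, Real.norm_eq_abs, norm_exp]
  simp only [neg_re, mul_re, ofReal_re, ofReal_im, mul_zero, sub_zero, neg_mul]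
  rw [← mul_assoc]
  gcongr

lemma integrableOn_mul_cexp_neg_mul {h : ℝ → ℝ} {η C M : ℝ} (hM : -1 < M)
    (hmeas : AEMeasurable h (volume.restrict (Ioo 0 η)))
    (hh : ∀ r, 0 < r → r < η → |h r| ≤ C * r ^ M) {w : ℂ} (hw : 0 < w.re) :
    IntegrableOn (fun r : ℝ => (h r : ℂ) * cexp (-(w * r))) (Ioo 0 η) := by
  refine (((integrableOn_rpow_mul_exp_neg_mul hM hw).mono_set Ioo_subset_Ioi_self).const_mul
    C).mono' ((measurable_ofReal.comp_aemeasurable hmeas).mul (by fun_prop)).aestronglyMeasurable ?_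
  filter_upwards [ae_restrict_mem measurableSet_Ioo] with r hr
  exact norm_ofReal_mul_cexp_neg_mul_le (hh r hr.1 hr.2) w

lemma norm_integral_mul_cexp_neg_mul_le {h : ℝ → ℝ} {η C M : ℝ} (hM : -1 < M) (hC : 0 ≤ C)
    (hh : ∀ r, 0 < r → r < η → |h r| ≤ C * r ^ M) {w : ℂ} (hw : 0 < w.re) :
    ‖∫ r in Ioo 0 η, (h r : ℂ) * cexp (-(w * r))‖
      ≤ C * (Real.Gamma (M + 1) * w.re ^ (-(M + 1))) := by
  have hint : IntegrableOn (fun r => C * (r ^ M * Real.exp (-w.re * r))) (Ioi 0) :=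
    (integrableOn_rpow_mul_exp_neg_mul hM hw).const_mul C
  calc ‖∫ r in Ioo 0 η, (h r : ℂ) * cexp (-(w * r))‖
      ≤ ∫ r in Ioo 0 η, C * (r ^ M * Real.exp (-w.re * r)) := by
        refine norm_integral_le_of_norm_le (hint.mono_set Ioo_subset_Ioi_self) ?_
        filter_upwards [ae_restrict_mem measurableSet_Ioo] with r hr
        exact norm_ofReal_mul_cexp_neg_mul_le (hh r hr.1 hr.2) w
    _ ≤ ∫ r in Ioi 0, C * (r ^ M * Real.exp (-w.re * r)) := by
        refine setIntegral_mono_set hint ?_ Ioo_subset_Ioi_self.eventuallyLE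
        filter_upwards [ae_restrict_mem measurableSet_Ioi] with r (hr : 0 < r)
        positivity
    _ = C * (Real.Gamma (M + 1) * w.re ^ (-(M + 1))) := by
        rw [integral_const_mul, integral_rpow_mul_exp_neg_mul hM hw]

lemma isBigO_mul_integral_mul_cexp_neg_mul {h : ℝ → ℝ} {η C M : ℝ} (hM : -1 < M) (hC : 0 ≤ C)
    (hh : ∀ r, 0 < r → r < η → |h r| ≤ C * r ^ M) {ζ : ℂ} (hζ : 0 < ζ.re) :
    (fun τ : ℝ => (τ : ℂ) * ∫ r in Ioo 0 η, (h r : ℂ) * cexp (-(τ * ζ * r)))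
      =O[atTop] fun τ => τ ^ (-M) := by
  refine IsBigO.of_bound (C * (Real.Gamma (M + 1) * ζ.re ^ (-(M + 1)))) ?_
  filter_upwards [eventually_gt_atTop 0] with τ hτ
  have hre : ((τ : ℂ) * ζ).re = τ * ζ.re := re_ofReal_mul τ ζ
  have hbound := norm_integral_mul_cexp_neg_mul_le hM hC hh (w := τ * ζ) (by rw [hre]; positivity)
  rw [hre, Real.mul_rpow hτ.le hζ.le] at hbound
  rw [norm_mul, norm_real, Real.norm_of_nonneg hτ.le,
    Real.norm_of_nonneg (Real.rpow_nonneg hτ.le _)]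
  calc τ * ‖∫ r in Ioo 0 η, (h r : ℂ) * cexp (-(τ * ζ * r))‖
      ≤ τ * (C * (Real.Gamma (M + 1) * (τ ^ (-(M + 1)) * ζ.re ^ (-(M + 1))))) := by gcongr
    _ = C * (Real.Gamma (M + 1) * ζ.re ^ (-(M + 1))) * (τ * τ ^ (-(M + 1))) := by ring
    _ = C * (Real.Gamma (M + 1) * ζ.re ^ (-(M + 1))) * τ ^ (-M) := by
        rw [show -M = 1 + -(M + 1) by ring, Real.rpow_add hτ, Real.rpow_one]

lemma isBigO_mul_exp_neg_mul_rpow {a : ℝ} (ha : 0 < a) (M : ℝ) :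
    (fun τ : ℝ => τ * Real.exp (-a * τ)) =O[atTop] fun τ => τ ^ (-M) := by
  refine ((isBigO_refl (fun τ : ℝ => τ) atTop).mul
    (isLittleO_exp_neg_mul_rpow_atTop ha (-M - 1)).isBigO).congr' EventuallyEq.rfl ?_
  filter_upwards [eventually_gt_atTop 0] with τ hτ
  rw [Real.rpow_sub_one hτ.ne']
  field_simp

lemma isBigO_mul_integral_Ici_rpow_mul_cexp_neg_mul {ν η : ℝ} (hν : -1 < ν) (hη : 0 < η)
    {ζ : ℂ} (hζ : 0 < ζ.re) (M : ℝ) :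
    (fun τ : ℝ => (τ : ℂ) * ∫ r in Ici η, ((r ^ ν : ℝ) : ℂ) * cexp (-(τ * ζ * r)))
      =O[atTop] fun τ => τ ^ (-M) := by
  set s := ζ.re
  set K := ∫ r in Ici η, r ^ ν * Real.exp (-s * r)
  have hint : IntegrableOn (fun r => r ^ ν * Real.exp (-s * r)) (Ici η) :=
    (integrableOn_rpow_mul_exp_neg_mul hν hζ).mono_set fun r (hr : η ≤ r) => hη.trans_le hr
  refine (IsBigO.of_bound (Real.exp (s * η) * K) ?_).trans
    (isBigO_mul_exp_neg_mul_rpow (mul_pos hζ hη) M)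
  filter_upwards [eventually_ge_atTop 1] with τ hτ
  have hτ0 : 0 < τ := by linarith
  -- on `r ≥ η`, `e^{-τ s r} ≤ e^{s η} e^{-s η τ} e^{-s r}` since `s (τ - 1) (r - η) ≥ 0`
  have hpt : ∀ r ∈ Ici η, ‖((r ^ ν : ℝ) : ℂ) * cexp (-(τ * ζ * r))‖
      ≤ Real.exp (s * η) * Real.exp (-(s * η) * τ) * (r ^ ν * Real.exp (-s * r)) := by
    intro r (hr : η ≤ r)
    rw [norm_rpow_mul_cexp_neg_mul (hη.le.trans hr), re_ofReal_mul, mul_left_comm,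
      ← Real.exp_add, ← Real.exp_add]
    refine mul_le_mul_of_nonneg_left (Real.exp_le_exp.2 ?_) (Real.rpow_nonneg (hη.le.trans hr) ν)
    nlinarith [mul_nonneg (mul_nonneg hζ.le (sub_nonneg.2 hr)) (sub_nonneg.2 hτ)]
  have hnorm : ‖∫ r in Ici η, ((r ^ ν : ℝ) : ℂ) * cexp (-(τ * ζ * r))‖
      ≤ Real.exp (s * η) * Real.exp (-(s * η) * τ) * K := by
    rw [← integral_const_mul]
    refine norm_integral_le_of_norm_le (hint.const_mul _) ?_
    filter_upwards [ae_restrict_mem measurableSet_Ici] with r hr using hpt r hr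
  rw [norm_mul, norm_real, Real.norm_of_nonneg hτ0.le, Real.norm_of_nonneg (by positivity)]
  calc τ * ‖∫ r in Ici η, ((r ^ ν : ℝ) : ℂ) * cexp (-(τ * ζ * r))‖
      ≤ τ * (Real.exp (s * η) * Real.exp (-(s * η) * τ) * K) := by gcongr
    _ = Real.exp (s * η) * K * (τ * Real.exp (-(s * η) * τ)) := by ring

theorem isBigO_mul_integral_sub_sum {ι : Type*} {s : Finset ι} {μ c : ι → ℝ} {g : ℝ → ℝ}
    {η C M : ℝ} (hη : 0 < η) (hμ : ∀ j ∈ s, -1 < μ j) (hM : -1 < M) (hC : 0 ≤ C)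
    (hmeas : AEMeasurable g (volume.restrict (Ioo 0 η)))
    (hg : ∀ r, 0 < r → r < η → |g r - ∑ j ∈ s, c j * r ^ μ j| ≤ C * r ^ M)
    {ζ : ℂ} (hζ : 0 < ζ.re) :
    (fun τ : ℝ => (τ : ℂ) * (∫ r in Ioo 0 η, (g r : ℂ) * cexp (-(τ * ζ * r)))
      - ∑ j ∈ s, c j * Real.Gamma (μ j + 1) * ζ ^ (-((μ j : ℂ) + 1)) * ((τ ^ (-μ j) : ℝ) : ℂ))
      =O[atTop] fun τ => τ ^ (-M) := by
  set R : ℝ → ℝ := fun r => g r - ∑ j ∈ s, c j * r ^ μ j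
  have hR : (fun τ : ℝ => (τ : ℂ) * ∫ r in Ioo 0 η, (R r : ℂ) * cexp (-(τ * ζ * r)))
      =O[atTop] fun τ => τ ^ (-M) :=
    isBigO_mul_integral_mul_cexp_neg_mul hM hC hg hζ
  have htail : (fun τ : ℝ => ∑ j ∈ s, (c j : ℂ) *
      ((τ : ℂ) * ∫ r in Ici η, ((r ^ μ j : ℝ) : ℂ) * cexp (-(τ * ζ * r))))
      =O[atTop] fun τ => τ ^ (-M) :=
    IsBigO.fun_sum fun j hj =>
      (isBigO_mul_integral_Ici_rpow_mul_cexp_neg_mul (hμ j hj) hη hζ M).const_mul_left _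
  refine (hR.sub htail).congr' ?_ EventuallyEq.rfl
  filter_upwards [eventually_gt_atTop 0] with τ hτ
  have hwre : 0 < ((τ : ℂ) * ζ).re := by rw [re_ofReal_mul]; positivity
  have hpow : ∀ j ∈ s, IntegrableOn (fun r : ℝ => ((r ^ μ j : ℝ) : ℂ) * cexp (-(τ * ζ * r)))
      (Ioi 0) := fun j hj => integrableOn_rpow_mul_cexp_neg_mul (hμ j hj) hwre
  have hsplit : ∫ r in Ioo 0 η, (g r : ℂ) * cexp (-(τ * ζ * r))
      = (∫ r in Ioo 0 η, (R r : ℂ) * cexp (-(τ * ζ * r)))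
        + ∑ j ∈ s, c j * ∫ r in Ioo 0 η, ((r ^ μ j : ℝ) : ℂ) * cexp (-(τ * ζ * r)) := by
    have hint : IntegrableOn (fun r : ℝ => (R r : ℂ) * cexp (-(τ * ζ * r))) (Ioo 0 η) :=
      integrableOn_mul_cexp_neg_mul hM
        (hmeas.sub (Finset.measurable_sum _ fun j _ => by fun_prop).aemeasurable) hg hwre
    have hint_j : ∀ j ∈ s, IntegrableOn
        (fun r : ℝ => (c j : ℂ) * (((r ^ μ j : ℝ) : ℂ) * cexp (-(τ * ζ * r)))) (Ioo 0 η) :=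
      fun j hj => ((hpow j hj).mono_set Ioo_subset_Ioi_self).const_mul _
    simp_rw [← integral_const_mul]
    rw [← integral_finsetSum _ hint_j, ← integral_add hint (integrable_finsetSum _ hint_j)]
    congr 1 with r
    simp only [R, ofReal_sub, ofReal_sum, ofReal_mul, sub_mul, Finset.sum_mul, mul_assoc]
    ring
  have hterm : ∀ j ∈ s,
      (τ : ℂ) * (c j * ∫ r in Ioo 0 η, ((r ^ μ j : ℝ) : ℂ) * cexp (-(τ * ζ * r)))
      = c j * Real.Gamma (μ j + 1) * ζ ^ (-((μ j : ℂ) + 1)) * ((τ ^ (-μ j) : ℝ) : ℂ)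
        - c j * ((τ : ℂ) * ∫ r in Ici η, ((r ^ μ j : ℝ) : ℂ) * cexp (-(τ * ζ * r))) := by
    intro j hj
    rw [integral_Ioo_eq_integral_Ioi_sub_integral_Ici hη (hpow j hj)]
    linear_combination (c j : ℂ) * mul_integral_rpow_mul_cexp_neg_mul (hμ j hj) hτ hζ
  rw [hsplit, mul_add, Finset.mul_sum, Finset.sum_congr rfl hterm, Finset.sum_sub_distrib]
  ring

lemma neg_sin_add_cos_mul_I_eq_cexp (θ : ℝ) :
    -((Real.sin θ : ℂ) + Real.cos θ * I) = cexp (-((θ + Real.pi / 2 : ℝ) * I)) := by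
  rw [← neg_mul, ← ofReal_neg, exp_mul_I, ← ofReal_cos, ← ofReal_sin, Real.cos_neg,
    Real.sin_neg, Real.cos_add_pi_div_two, Real.sin_add_pi_div_two]
  push_cast
  ring

lemma cexp_neg_mul_I_mul_cpow {θ : ℝ} (h₁ : -(3 * Real.pi / 2) ≤ θ) (h₂ : θ < Real.pi / 2)
    (ν : ℝ) :
    cexp (-I * θ) * (-((Real.sin θ : ℂ) + Real.cos θ * I)) ^ (-((ν : ℂ) + 1))
      = I * cexp (I * Real.pi * ν / 2) * cexp (I * θ * ν) := by
  have hlog : log (cexp (-((θ + Real.pi / 2 : ℝ) * I))) = -((θ + Real.pi / 2 : ℝ) * I) :=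
    log_exp (by simp; linarith) (by simp; linarith)
  calc cexp (-I * θ) * (-((Real.sin θ : ℂ) + Real.cos θ * I)) ^ (-((ν : ℂ) + 1))
      = cexp (Real.pi / 2 * I + (I * Real.pi * ν / 2 + I * θ * ν)) := by
        rw [neg_sin_add_cos_mul_I_eq_cexp, cpow_def_of_ne_zero (exp_ne_zero _), hlog, ← exp_add]
        congr 1
        push_cast
        ring
    _ = I * cexp (I * Real.pi * ν / 2) * cexp (I * θ * ν) := by
        rw [exp_add, exp_add, exp_pi_div_two_mul_I]
        ring

theorem isBigO_edge_integral_sub_sum {ι : Type*} {s : Finset ι} {μ c : ι → ℝ} {g : ℝ → ℝ}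
    {η θ C M : ℝ} (hη : 0 < η) (hθ : -Real.pi < θ) (hθ₀ : θ < 0) (hμ : ∀ j ∈ s, -1 < μ j)
    (hM : -1 < M) (hC : 0 ≤ C) (hmeas : AEMeasurable g (volume.restrict (Ioo 0 η)))
    (hg : ∀ r, 0 < r → r < η → |g r - ∑ j ∈ s, c j * r ^ μ j| ≤ C * r ^ M) :
    (fun τ : ℝ => (τ : ℂ) * cexp (-I * θ) *
        (∫ r in Ioo 0 η, (g r : ℂ) * cexp (r * τ * ((Real.sin θ : ℂ) + Real.cos θ * I)))
      - I * ∑ j ∈ s, cexp (I * Real.pi * μ j / 2) * Real.Gamma (1 + μ j) *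
          (c j * cexp (I * θ * μ j)) * ((τ ^ (-μ j) : ℝ) : ℂ))
      =O[atTop] fun τ => τ ^ (-M) := by
  set ζ : ℂ := -((Real.sin θ : ℂ) + Real.cos θ * I)
  have hζ : 0 < ζ.re := by
    have := Real.sin_neg_of_neg_of_neg_pi_lt hθ₀ hθ
    simp only [ζ, neg_re, add_re, mul_re, ofReal_re, ofReal_im, I_re, I_im]
    linarith
  refine ((isBigO_mul_integral_sub_sum hη hμ hM hC hmeas hg hζ).const_mul_left
    (cexp (-I * θ))).congr' (Eventually.of_forall fun τ => ?_) EventuallyEq.rfl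
  have hexp : ∀ r : ℝ, (r : ℂ) * τ * ((Real.sin θ : ℂ) + Real.cos θ * I) = -(τ * ζ * r) :=
    fun r => by ring
  have hcoef : ∀ j ∈ s, cexp (-I * θ) * ζ ^ (-((μ j : ℂ) + 1))
      = I * cexp (I * Real.pi * μ j / 2) * cexp (I * θ * μ j) := fun j _ =>
    cexp_neg_mul_I_mul_cpow (by linarith [Real.pi_pos]) (by linarith [Real.pi_pos]) (μ j)
  simp only [hexp, mul_sub, Finset.mul_sum]
  congr 1
  · ring
  · refine Finset.sum_congr rfl fun j hj => ?_
    rw [add_comm 1 (μ j)]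
    linear_combination (c j * Real.Gamma (μ j + 1) * ((τ ^ (-μ j) : ℝ) : ℂ) : ℂ) * hcoef j hj

theorem stmt_4_general (η p q : ℝ) (hη : 0 < η) (hq : -Real.pi < q) (hqp : q < p) (hp : p < 0)
    (μ : ℕ → ℝ) (hμpos : ∀ j, 1 ≤ j → 0 < μ j)
    (a b : ℕ → ℝ) (g_p g_q : ℝ → ℝ)
    (hgpm : AEMeasurable g_p (volume.restrict (Set.Ioo 0 η)))
    (hgqm : AEMeasurable g_q (volume.restrict (Set.Ioo 0 η)))
    (hbound : ∀ l : ℕ, 1 ≤ l → ∃ C > (0:ℝ), ∀ r : ℝ, 0 < r → r < η →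
      |g_p r - ∑ j ∈ Finset.Icc 1 l, a j * r ^ (μ j)| ≤ C * r ^ (μ (l + 1)) ∧
      |g_q r - ∑ j ∈ Finset.Icc 1 l, b j * r ^ (μ j)| ≤ C * r ^ (μ (l + 1))) :
    ∀ l : ℕ, 1 ≤ l →
      (fun τ : ℝ =>
        (-(τ : ℂ) * Complex.exp (-(Complex.I) * p) *
            (∫ r in Set.Ioo (0:ℝ) η, ((g_p r : ℝ) : ℂ) *
              Complex.exp ((r : ℂ) * (τ : ℂ) * ((Real.sin p : ℂ) + (Real.cos p : ℂ) * Complex.I)))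
          + (τ : ℂ) * Complex.exp (-(Complex.I) * q) *
            (∫ r in Set.Ioo (0:ℝ) η, ((g_q r : ℝ) : ℂ) *
              Complex.exp ((r : ℂ) * (τ : ℂ) * ((Real.sin q : ℂ) + (Real.cos q : ℂ) * Complex.I))))
        - (-(Complex.I) * ∑ j ∈ Finset.Icc 1 l,
            Complex.exp (Complex.I * Real.pi * μ j / 2) * (Real.Gamma (1 + μ j) : ℂ) *
              ((a j : ℂ) * Complex.exp (Complex.I * p * μ j)
                - (b j : ℂ) * Complex.exp (Complex.I * q * μ j)) *
              ((τ ^ (-(μ j)) : ℝ) : ℂ)))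
      =O[atTop] fun τ : ℝ => τ ^ (-(μ (l + 1))) := by
  intro l hl
  obtain ⟨C, hC, hCb⟩ := hbound l hl
  have hμ : ∀ j ∈ Finset.Icc 1 l, -1 < μ j := fun j hj =>
    by linarith [hμpos j (Finset.mem_Icc.1 hj).1]
  have hM : -1 < μ (l + 1) := by linarith [hμpos (l + 1) (by omega)]
  have hP := isBigO_edge_integral_sub_sum hη (hq.trans hqp) hp hμ hM hC.le hgpm
    fun r h₀ hη' => (hCb r h₀ hη').1
  have hQ := isBigO_edge_integral_sub_sum hη hq (hqp.trans hp) hμ hM hC.le hgqm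
    fun r h₀ hη' => (hCb r h₀ hη').2
  refine (hQ.sub hP).congr' (Eventually.of_forall fun τ => ?_) EventuallyEq.rfl
  simp only [mul_sub, sub_mul, Finset.sum_sub_distrib]
  ring

/-- The analytic core of Proposition 3.2: with `g_p, g_q` admitting the asymptotic
expansions `Σ a_j r^{μ_j}`, `Σ b_j r^{μ_j}` near `r = 0`, the quantity
`J(τ) = −τ e^{−ip} ∫_0^η g_p(r) e^{rτ(sin p + i cos p)} dr
        + τ e^{−iq} ∫_0^η g_q(r) e^{rτ(sin q + i cos q)} dr`
satisfies, for every `l ≥ 1`,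
`J(τ) = −i Σ_{j=1}^l e^{iπμ_j/2} Γ(1+μ_j) (a_j e^{ipμ_j} − b_j e^{iqμ_j}) τ^{−μ_j}
        + O(τ^{−μ_{l+1}})` as `τ → ∞`. -/
theorem stmt_4 (η p q : ℝ) (hη : 0 < η) (hq : -Real.pi < q) (hqp : q < p) (hp : p < 0)
    (μ : ℕ → ℝ) (hμpos : ∀ j, 1 ≤ j → 0 < μ j) (hμmono : ∀ j, 1 ≤ j → μ j < μ (j + 1))
    (a b : ℕ → ℝ) (g_p g_q : ℝ → ℝ)
    (hgpm : AEMeasurable g_p (volume.restrict (Set.Ioo 0 η)))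
    (hgqm : AEMeasurable g_q (volume.restrict (Set.Ioo 0 η)))
    (hbound : ∀ l : ℕ, 1 ≤ l → ∃ C > (0:ℝ), ∀ r : ℝ, 0 < r → r < η →
      |g_p r - ∑ j ∈ Finset.Icc 1 l, a j * r ^ (μ j)| ≤ C * r ^ (μ (l + 1)) ∧
      |g_q r - ∑ j ∈ Finset.Icc 1 l, b j * r ^ (μ j)| ≤ C * r ^ (μ (l + 1))) :
    ∀ l : ℕ, 1 ≤ l →
      (fun τ : ℝ =>
        (-(τ : ℂ) * Complex.exp (-(Complex.I) * p) *
            (∫ r in Set.Ioo (0:ℝ) η, ((g_p r : ℝ) : ℂ) *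
              Complex.exp ((r : ℂ) * (τ : ℂ) * ((Real.sin p : ℂ) + (Real.cos p : ℂ) * Complex.I)))
          + (τ : ℂ) * Complex.exp (-(Complex.I) * q) *
            (∫ r in Set.Ioo (0:ℝ) η, ((g_q r : ℝ) : ℂ) *
              Complex.exp ((r : ℂ) * (τ : ℂ) * ((Real.sin q : ℂ) + (Real.cos q : ℂ) * Complex.I))))
        - (-(Complex.I) * ∑ j ∈ Finset.Icc 1 l,
            Complex.exp (Complex.I * Real.pi * μ j / 2) * (Real.Gamma (1 + μ j) : ℂ) *
              ((a j : ℂ) * Complex.exp (Complex.I * p * μ j)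
                - (b j : ℂ) * Complex.exp (Complex.I * q * μ j)) *
              ((τ ^ (-(μ j)) : ℝ) : ℂ)))
      =O[atTop] fun τ : ℝ => τ ^ (-(μ (l + 1))) :=
  stmt_4_general η p q hη hq hqp hp μ hμpos a b g_p g_q hgpm hgqm hbound
end

section
/- Let k, Θ, μ be real numbers. Suppose there exist real numbers A, B, not both zero, such that A (cos 2πμ − cos²Θμ − k sin²Θμ) + B (sin 2πμ + (k−1) cos Θμ · sin Θμ) = 0 and A cos Θμ · sin((Θ−2π)μ) + B sin Θμ · sin((Θ−2π)μ) = 0. Then sin((2π−Θ)μ) · (sin((2π−Θ)μ) + k sin Θμ) = 0. -/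
/-- Derivation of (4.5): if `(A, B) ≠ (0, 0)` satisfies (2.6) and (4.3), then
`sin((2π−Θ)μ) (sin((2π−Θ)μ) + k sin Θμ) = 0`. -/
theorem stmt_7 (k Θ μ A B : ℝ) (hAB : ¬(A = 0 ∧ B = 0))
    (h1 : A * (Real.cos (2 * Real.pi * μ) - Real.cos (Θ * μ) ^ 2 - k * Real.sin (Θ * μ) ^ 2)
        + B * (Real.sin (2 * Real.pi * μ) + (k - 1) * Real.cos (Θ * μ) * Real.sin (Θ * μ)) = 0)
    (h2 : A * Real.cos (Θ * μ) * Real.sin ((Θ - 2 * Real.pi) * μ)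
        + B * Real.sin (Θ * μ) * Real.sin ((Θ - 2 * Real.pi) * μ) = 0) :
    Real.sin ((2 * Real.pi - Θ) * μ) *
      (Real.sin ((2 * Real.pi - Θ) * μ) + k * Real.sin (Θ * μ)) = 0 := by
  set c := Real.cos (Θ * μ) with hc
  set s := Real.sin (Θ * μ) with hs
  set C := Real.cos (2 * Real.pi * μ) with hC
  set S := Real.sin (2 * Real.pi * μ) with hS
  set a := C - c ^ 2 - k * s ^ 2 with ha
  set b := S + (k - 1) * c * s with hb
  have hsub : Real.sin ((Θ - 2 * Real.pi) * μ) = s * C - c * S := by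
    rw [show (Θ - 2 * Real.pi) * μ = Θ * μ - 2 * Real.pi * μ by ring, Real.sin_sub]
  have hsub2 : Real.sin ((2 * Real.pi - Θ) * μ) = c * S - s * C := by
    rw [show (2 * Real.pi - Θ) * μ = 2 * Real.pi * μ - Θ * μ by ring, Real.sin_sub]
    ring
  rw [hsub] at h2
  have hpyth : s ^ 2 + c ^ 2 = 1 := Real.sin_sq_add_cos_sq (Θ * μ)
  -- determinant vanishes
  have hdet : a * (s * (s * C - c * S)) - b * (c * (s * C - c * S)) = 0 := by
    by_cases hA : A = 0
    · have hB : B ≠ 0 := fun hBz => hAB ⟨hA, hBz⟩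
      have : B * (b * (c * (s * C - c * S)) - a * (s * (s * C - c * S))) = 0 := by
        linear_combination (c * (s * C - c * S)) * h1 - a * h2
      rcases mul_eq_zero.1 this with h | h
      · exact absurd h hB
      · linarith
    · have : A * (a * (s * (s * C - c * S)) - b * (c * (s * C - c * S))) = 0 := by
        linear_combination (s * (s * C - c * S)) * h1 - b * h2
      rcases mul_eq_zero.1 this with h | h
      · exact absurd h hA
      · exact h
  rw [hsub2]
  linear_combination hdet + (k * s * (s * C - c * S)) * hpyth
end

section
/- Let k > 0 with k ≠ 1, let π < Θ < 2π, let μ > 0, and let p, q be real numbers with −π < q < p < 0 and p + Θ = 2π + q. Let A^i, B^i be real numbers, not both zero, and define A^e = A^i cos 2πμ + B^i sin 2πμ, B^e = −k A^i sin 2πμ + k B^i cos 2πμ, and suppose additionally that A^e = (cos²Θμ + k sin²Θμ) A^i + (1−k) cos Θμ · sin Θμ · B^i and B^e = (1−k) cos Θμ · sin Θμ · A^i + (sin²Θμ + k cos²Θμ) B^i. If A^e e^{ipμ} − (A^i cos Θμ + B^i sin Θμ) e^{iqμ} = 0, then sin((2π−Θ)μ) = 0. -/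
/-- Step 1 of the proof of Lemma 4.1: under the transmission relations (2.2), (2.3) with
nontrivial interior coefficients, the vanishing of
`K = A^e e^{ipμ} − (A^i cos Θμ + B^i sin Θμ) e^{iqμ}` forces `sin((2π−Θ)μ) = 0`. -/
theorem stmt_10 (k Θ μ p q Ai Bi Ae Be : ℝ)
    (hk : 0 < k) (hk1 : k ≠ 1)
    (hΘ₁ : Real.pi < Θ) (hΘ₂ : Θ < 2 * Real.pi) (hμ : 0 < μ)
    (hq : -Real.pi < q) (hqp : q < p) (hp : p < 0)
    (hpq : p + Θ = 2 * Real.pi + q)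
    (hAB : ¬(Ai = 0 ∧ Bi = 0))
    (hAe : Ae = Ai * Real.cos (2 * Real.pi * μ) + Bi * Real.sin (2 * Real.pi * μ))
    (hBe : Be = -k * Ai * Real.sin (2 * Real.pi * μ) + k * Bi * Real.cos (2 * Real.pi * μ))
    (hAe' : Ae = (Real.cos (Θ * μ) ^ 2 + k * Real.sin (Θ * μ) ^ 2) * Ai
        + (1 - k) * Real.cos (Θ * μ) * Real.sin (Θ * μ) * Bi)
    (hBe' : Be = (1 - k) * Real.cos (Θ * μ) * Real.sin (Θ * μ) * Ai
        + (Real.sin (Θ * μ) ^ 2 + k * Real.cos (Θ * μ) ^ 2) * Bi)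
    (hK : (Ae : ℂ) * Complex.exp (Complex.I * p * μ)
        - ((Ai * Real.cos (Θ * μ) + Bi * Real.sin (Θ * μ) : ℝ) : ℂ) *
            Complex.exp (Complex.I * q * μ) = 0) :
    Real.sin ((2 * Real.pi - Θ) * μ) = 0 := by
  by_contra hsw
  set c := Real.cos (Θ * μ) with hc
  set s := Real.sin (Θ * μ) with hs
  set w := (2 * Real.pi - Θ) * μ with hw
  have hcs : c ^ 2 + s ^ 2 = 1 := by
    rw [hc, hs, add_comm]; exact Real.sin_sq_add_cos_sq _
  have h2π : 2 * Real.pi * μ = Θ * μ + w := by rw [hw]; ring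
  have hcos2 : Real.cos (2 * Real.pi * μ) = c * Real.cos w - s * Real.sin w := by
    rw [h2π, Real.cos_add]
  have hsin2 : Real.sin (2 * Real.pi * μ) = s * Real.cos w + c * Real.sin w := by
    rw [h2π, Real.sin_add]
  -- complex step: peel off e^{iqμ} from hK
  have hpc : (p : ℂ) + (Θ : ℂ) = 2 * (Real.pi : ℂ) + (q : ℂ) := by exact_mod_cast hpq
  have h1 : Complex.I * (p : ℂ) * (μ : ℂ)
      = Complex.I * (q : ℂ) * (μ : ℂ) + (w : ℂ) * Complex.I := by
    rw [hw]; push_cast; linear_combination Complex.I * (μ : ℂ) * hpc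
  rw [h1, Complex.exp_add, Complex.exp_mul_I] at hK
  have hE : (Ae : ℂ) * (Complex.cos (w : ℂ) + Complex.sin (w : ℂ) * Complex.I)
      = ((Ai * c + Bi * s : ℝ) : ℂ) := by
    apply mul_right_cancel₀ (Complex.exp_ne_zero (Complex.I * (q : ℂ) * (μ : ℂ)))
    linear_combination hK
  rw [← Complex.ofReal_cos, ← Complex.ofReal_sin] at hE
  rw [Complex.ext_iff] at hE
  simp [Complex.mul_re, Complex.mul_im, Complex.add_re, Complex.add_im,
    Complex.cos_ofReal_re, Complex.sin_ofReal_re, Complex.cos_ofReal_im,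
    Complex.sin_ofReal_im] at hE
  obtain ⟨hre, him⟩ := hE
  have hAe0 : Ae = 0 := by
    rcases him with h | h
    · exact h
    · exact absurd h hsw
  have hu : Ai * c + Bi * s = 0 := by
    rw [← hre, hAe0]; ring
  by_cases hs0 : s = 0
  · have hc0 : c ≠ 0 := by
      intro h; rw [h, hs0] at hcs; norm_num at hcs
    have hAi : Ai = 0 := by
      have hAc : Ai * c = 0 := by linear_combination hu - Bi * hs0
      rcases mul_eq_zero.1 hAc with h | h
      · exact h
      · exact absurd h hc0
    have hBi : Bi = 0 := by
      have h0 : (0 : ℝ) = Bi * (c * Real.sin w) := by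
        calc (0 : ℝ) = Ae := hAe0.symm
        _ = Ai * Real.cos (2 * Real.pi * μ) + Bi * Real.sin (2 * Real.pi * μ) := hAe
        _ = Bi * (c * Real.sin w) := by rw [hcos2, hsin2, hAi, hs0]; ring
      have h1 : Bi * (c * Real.sin w) = 0 := h0.symm
      rcases mul_eq_zero.1 h1 with h | h
      · exact h
      · rcases mul_eq_zero.1 h with h' | h'
        · exact absurd h' hc0
        · exact absurd h' hsw
    exact hAB ⟨hAi, hBi⟩
  · -- s ≠ 0 : from hAe' with Ae = 0 and hu, get Ai s − Bi c = 0, hence Ai = Bi = 0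
    have h0 : k * s * (Ai * s - Bi * c) = 0 := by
      have := hAe'
      rw [hAe0] at this
      linear_combination -this - c * hu
    have hv : Ai * s - Bi * c = 0 := by
      rcases mul_eq_zero.1 h0 with h | h
      · rcases mul_eq_zero.1 h with h' | h'
        · exact absurd h' (ne_of_gt hk)
        · exact absurd h' hs0
      · exact h
    have hAi : Ai = 0 := by
      have : Ai = c * (Ai * c + Bi * s) + s * (Ai * s - Bi * c) := by
        linear_combination -Ai * hcs
      rw [hu, hv] at this; simpa using this
    have hBi : Bi = 0 := by
      have : Bi = s * (Ai * c + Bi * s) - c * (Ai * s - Bi * c) := by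
        linear_combination -Bi * hcs
      rw [hu, hv] at this; simpa using this
    exact hAB ⟨hAi, hBi⟩
end

section
/- Let k > 0 with k ≠ 1, let π < Θ < 2π, let p, q be real numbers with −π < q < p < 0 and p + Θ = 2π + q, and let μ > 0 satisfy (1+k)² sin²(πμ) = (1−k)² sin²((π−Θ)μ). Let A^i, B^i be real numbers, not both zero, and define A^e = A^i cos 2πμ + B^i sin 2πμ and B^e = −k A^i sin 2πμ + k B^i cos 2πμ; suppose additionally that A^e = (cos²Θμ + k sin²Θμ) A^i + (1−k) cos Θμ · sin Θμ · B^i and B^e = (1−k) cos Θμ · sin Θμ · A^i + (sin²Θμ + k cos²Θμ) B^i, and that A^e e^{ipμ} − (A^i cos Θμ + B^i sin Θμ) e^{iqμ} = 0. Then μ is a positive integer, Θμ/π is an integer (in particular Θ/π is rational), and if Θ = π(1 + b/a) with a, b coprime positive integers, then a divides μ. -/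
lemma char_aux (k x y : ℝ) (hk : 0 < k) (hk1 : k ≠ 1) (h0 : Real.sin (x + y) = 0)
    (hc : (1 + k) ^ 2 * Real.sin x ^ 2 = (1 - k) ^ 2 * Real.sin y ^ 2) :
    Real.sin x = 0 ∧ Real.sin y = 0 := by
  have h1 : Real.sin x * Real.cos y + Real.cos x * Real.sin y = 0 := by
    rw [← Real.sin_add]; exact h0
  have px := Real.sin_sq_add_cos_sq x
  have py := Real.sin_sq_add_cos_sq y
  have h2 : Real.sin x ^ 2 * Real.cos y ^ 2 = Real.cos x ^ 2 * Real.sin y ^ 2 := by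
    linear_combination (Real.sin x * Real.cos y - Real.cos x * Real.sin y) * h1
  have hsq : Real.sin x ^ 2 = Real.sin y ^ 2 := by
    linear_combination h2 + Real.sin y ^ 2 * px - Real.sin x ^ 2 * py
  have hx : Real.sin x = 0 := by
    by_contra h
    have hpos : 0 < Real.sin x ^ 2 := by positivity
    rw [hsq] at hc
    nlinarith [hsq]
  refine ⟨hx, ?_⟩
  have h2' : (1 - k) ^ 2 * Real.sin y ^ 2 = 0 := by rw [← hc, hx]; ring
  have hk2 : (1 - k) ^ 2 ≠ 0 := by intro h; apply hk1; nlinarith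
  have := (mul_eq_zero.mp h2').resolve_left hk2
  exact pow_eq_zero_iff two_ne_zero |>.mp this

/-- Steps 1–3 of the proof of Lemma 4.1 combined: under the characteristic equation (2.1),
the transmission relations (2.2), (2.3) with nontrivial interior coefficients, and the
vanishing of `K = A^e e^{ipμ} − (A^i cos Θμ + B^i sin Θμ) e^{iqμ}`, the exponent `μ` is a
positive integer, `Θμ/π` is an integer, and if `Θ = π(1 + b/a)` in lowest terms then
`a` divides `μ`. -/
theorem stmt_17 (k Θ μ p q Ai Bi Ae Be : ℝ)
    (hk : 0 < k) (hk1 : k ≠ 1)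
    (hΘ₁ : Real.pi < Θ) (hΘ₂ : Θ < 2 * Real.pi) (hμ : 0 < μ)
    (hq : -Real.pi < q) (hqp : q < p) (hp : p < 0)
    (hpq : p + Θ = 2 * Real.pi + q)
    (hchar : (1 + k) ^ 2 * Real.sin (Real.pi * μ) ^ 2
        = (1 - k) ^ 2 * Real.sin ((Real.pi - Θ) * μ) ^ 2)
    (hAB : ¬(Ai = 0 ∧ Bi = 0))
    (hAe : Ae = Ai * Real.cos (2 * Real.pi * μ) + Bi * Real.sin (2 * Real.pi * μ))
    (hBe : Be = -k * Ai * Real.sin (2 * Real.pi * μ) + k * Bi * Real.cos (2 * Real.pi * μ))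
    (hAe' : Ae = (Real.cos (Θ * μ) ^ 2 + k * Real.sin (Θ * μ) ^ 2) * Ai
        + (1 - k) * Real.cos (Θ * μ) * Real.sin (Θ * μ) * Bi)
    (hBe' : Be = (1 - k) * Real.cos (Θ * μ) * Real.sin (Θ * μ) * Ai
        + (Real.sin (Θ * μ) ^ 2 + k * Real.cos (Θ * μ) ^ 2) * Bi)
    (hK : (Ae : ℂ) * Complex.exp (Complex.I * p * μ)
        - ((Ai * Real.cos (Θ * μ) + Bi * Real.sin (Θ * μ) : ℝ) : ℂ) *
            Complex.exp (Complex.I * q * μ) = 0) :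
    (∃ n : ℕ, 0 < n ∧ μ = n) ∧
    (∃ m : ℤ, Θ * μ / Real.pi = m) ∧
    (∀ a b : ℕ, 0 < a → 0 < b → Nat.Coprime a b →
      Θ = Real.pi * (1 + (b : ℝ) / (a : ℝ)) → ∃ m : ℕ, μ = (a : ℝ) * m) := by
  have hπ := Real.pi_pos
  set R : ℝ := Ai * Real.cos (Θ * μ) + Bi * Real.sin (Θ * μ) with hR
  have hK' : (Ae : ℂ) * Complex.exp (((p - q) * μ : ℝ) * Complex.I) = (R : ℂ) := by
    have h1 : (Ae : ℂ) * Complex.exp (Complex.I * p * μ)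
        = (R : ℂ) * Complex.exp (Complex.I * q * μ) := sub_eq_zero.mp hK
    have h2 : Complex.exp (Complex.I * p * μ)
        = Complex.exp (((p - q) * μ : ℝ) * Complex.I) * Complex.exp (Complex.I * q * μ) := by
      rw [← Complex.exp_add]; push_cast; ring_nf
    rw [h2, ← mul_assoc] at h1
    exact mul_right_cancel₀ (Complex.exp_ne_zero _) h1
  have him : Ae * Real.sin ((p - q) * μ) = 0 := by
    have h := congrArg Complex.im hK'
    simpa only [Complex.mul_im, Complex.ofReal_re, Complex.ofReal_im,
      Complex.exp_ofReal_mul_I_im, Complex.exp_ofReal_mul_I_re, zero_mul, add_zero] using h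
  have hpq2 : (p - q) * μ = Real.pi * μ + (Real.pi - Θ) * μ := by
    have : p - q = 2 * Real.pi - Θ := by linarith
    rw [this]; ring
  have key : Real.sin (Real.pi * μ) = 0 ∧ Real.sin (Θ * μ) = 0 := by
    by_cases hAe0 : Ae = 0
    · have hR0 : R = 0 := by
        have : (R : ℂ) = 0 := by rw [← hK', hAe0]; simp
        exact_mod_cast this
      set c := Real.cos (Θ * μ) with hcdef
      set s := Real.sin (Θ * μ) with hsdef
      have hsc : s ^ 2 + c ^ 2 = 1 := Real.sin_sq_add_cos_sq (Θ * μ)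
      have hR0' : Ai * c + Bi * s = 0 := hR0
      have h3 : (c ^ 2 + k * s ^ 2) * Ai + (1 - k) * c * s * Bi = 0 := by
        rw [← hAe']; exact hAe0
      have hkey : s * (s * Ai - c * Bi) = 0 := by
        have hk0 : k * (s * (s * Ai - c * Bi)) = 0 := by
          linear_combination h3 - c * hR0'
        exact (mul_eq_zero.mp hk0).resolve_left (ne_of_gt hk)
      rcases mul_eq_zero.mp hkey with hs0 | hsc0
      · have hc2 : c ^ 2 = 1 := by nlinarith [hsc, hs0]
        have hAi : Ai = 0 := by
          have hac : Ai * c = 0 := by rw [hs0] at hR0'; linarith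
          have hcne : c ≠ 0 := by intro h; rw [h] at hc2; norm_num at hc2
          exact (mul_eq_zero.mp hac).resolve_right hcne
        have hBi : Bi ≠ 0 := fun h => hAB ⟨hAi, h⟩
        have e1 : Be = k * Bi * Real.cos (2 * Real.pi * μ) := by rw [hBe, hAi]; ring
        have e2 : Be = k * Bi := by
          rw [hBe', hAi, hs0]; linear_combination k * Bi * hc2
        have hC1 : Real.cos (2 * Real.pi * μ) = 1 := by
          have h4 : k * Bi * Real.cos (2 * Real.pi * μ) = k * Bi * 1 := by
            rw [← e1, e2, mul_one]
          exact mul_left_cancel₀ (mul_ne_zero (ne_of_gt hk) hBi) h4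
        have hsin : Real.sin (Real.pi * μ) = 0 := by
          have h5 : Real.cos (2 * (Real.pi * μ)) = 1 := by
            rw [show 2 * (Real.pi * μ) = 2 * Real.pi * μ by ring]; exact hC1
          rw [Real.cos_two_mul] at h5
          have h6 := Real.sin_sq_add_cos_sq (Real.pi * μ)
          have h7 : Real.sin (Real.pi * μ) ^ 2 = 0 := by linarith
          exact pow_eq_zero_iff two_ne_zero |>.mp h7
        exact ⟨hsin, hs0⟩
      · exfalso
        have hAi : Ai = 0 := by linear_combination s * hsc0 + c * hR0' - Ai * hsc
        have hBi : Bi = 0 := by linear_combination s * hR0' - c * hsc0 - Bi * hsc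
        exact hAB ⟨hAi, hBi⟩
    · have hsin0 : Real.sin ((p - q) * μ) = 0 := (mul_eq_zero.mp him).resolve_left hAe0
      rw [hpq2] at hsin0
      obtain ⟨h1, h2⟩ := char_aux k (Real.pi * μ) ((Real.pi - Θ) * μ) hk hk1 hsin0 hchar
      refine ⟨h1, ?_⟩
      have h3 : Θ * μ = Real.pi * μ - (Real.pi - Θ) * μ := by ring
      rw [h3, Real.sin_sub, h1, h2]; ring
  obtain ⟨hx, hs0⟩ := key
  obtain ⟨n, hn⟩ := Real.sin_eq_zero_iff.mp hx
  have hμn : μ = n := by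
    have h1 : Real.pi * μ = Real.pi * n := by rw [← hn]; ring
    exact (mul_left_cancel₀ (ne_of_gt hπ) h1)
  have hnpos : 0 < n := by
    have : (0 : ℝ) < (n : ℝ) := by rw [← hμn]; exact hμ
    exact_mod_cast this
  obtain ⟨m, hm⟩ := Real.sin_eq_zero_iff.mp hs0
  refine ⟨⟨n.toNat, by omega, by rw [hμn]; exact_mod_cast (Int.toNat_of_nonneg hnpos.le).symm⟩,
    ⟨m, by rw [← hm]; field_simp⟩, ?_⟩
  intro a b ha hb hab hΘ
  have haR : (a : ℝ) ≠ 0 := Nat.cast_ne_zero.mpr (by omega)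
  have h1 : (m : ℝ) * Real.pi = Real.pi * (1 + (b : ℝ) / a) * (n : ℝ) := by
    rw [← hμn, ← hΘ]; exact hm
  have h2 : (m : ℝ) * (a : ℝ) = ((a : ℝ) + b) * n := by
    have hba : ((b : ℝ) / a) * a = b := div_mul_cancel₀ _ haR
    have h1' : Real.pi * ((m : ℝ) * a) = Real.pi * (((a : ℝ) + b) * n) := by
      linear_combination (a : ℝ) * h1 + Real.pi * (n : ℝ) * hba
    exact mul_left_cancel₀ (ne_of_gt hπ) h1'
  have hint : m * (a : ℤ) = ((a : ℤ) + b) * n := by exact_mod_cast h2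
  have hdvd : (a : ℤ) ∣ ((a : ℤ) + b) * n := ⟨m, by linarith⟩
  have hcop : IsCoprime (a : ℤ) ((a : ℤ) + b) := by
    rw [Int.isCoprime_iff_gcd_eq_one,
      show ((a : ℤ) + b) = ((a + b : ℕ) : ℤ) by push_cast; ring, Int.gcd_natCast_natCast]
    exact Nat.coprime_self_add_right.mpr hab
  obtain ⟨t, ht⟩ := hcop.dvd_of_dvd_mul_left hdvd
  have haZ : (0 : ℤ) < a := by exact_mod_cast ha
  have htpos : 0 ≤ t := by
    by_contra h
    push_neg at h
    have : (a : ℤ) * t < 0 := mul_neg_of_pos_of_neg haZ h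
    linarith
  refine ⟨t.toNat, ?_⟩
  rw [hμn, ht]
  have h9 : ((t.toNat : ℕ) : ℝ) = (t : ℝ) := by exact_mod_cast Int.toNat_of_nonneg htpos
  rw [h9]; push_cast; ring
end
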